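/- For all (α,β) with sin β ≠ 0, the quaternion-valued derivatives of ι(α,β) satisfy: (1) ι_β⁻¹·∂(ι_β⁻¹)/∂β = −ι·ι_β⁻¹; (2) (ι_β⁻¹)² = −1; (3) (ι_α⁻¹)² = −1/sin²β; (4) ι_α⁻¹·∂(ι_β⁻¹)/∂α = −cot β. -/

import Mathlib

open Quaternion

noncomputable section

/-- `ι(α,β) = cos α sin β · i + sin α sin β · j + cos β · k`, a unit imaginary quaternion. -/
def iota (α β : ℝ) : ℍ[ℝ] :=
  ⟨0, Real.cos α * Real.sin β, Real.sin α * Real.sin β, Real.cos β⟩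
/-- `ι_α = ∂ι/∂α`. -/
def iotaA (α β : ℝ) : ℍ[ℝ] := deriv (fun a => iota a β) α
/-- `ι_β = ∂ι/∂β`. -/
def iotaB (α β : ℝ) : ℍ[ℝ] := deriv (fun b => iota α b) β

/-- Partial derivative in `α` of a quaternion-valued function of `(α,β)`. -/
def pA (g : ℝ → ℝ → ℍ[ℝ]) (α β : ℝ) : ℍ[ℝ] := deriv (fun a => g a β) α
/-- Partial derivative in `β` of a quaternion-valued function of `(α,β)`. -/
def pB (g : ℝ → ℝ → ℍ[ℝ]) (α β : ℝ) : ℍ[ℝ] := deriv (fun b => g α b) β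
/-- The left angular derivative `∂g/∂ιₗ := ι_α⁻¹ (∂g/∂α) + ι_β⁻¹ (∂g/∂β)`. -/
def DI (g : ℝ → ℝ → ℍ[ℝ]) (α β : ℝ) : ℍ[ℝ] :=
  (iotaA α β)⁻¹ * pA g α β + (iotaB α β)⁻¹ * pB g α β

/-! For an imaginary quaternion `q`, `q² = -|q|²`; this gives (2) and (3), since `ι_β` is a unit
imaginary quaternion (so also `ι_β⁻¹ = -ι_β`) and `ι_α` is imaginary with `|ι_α|² = sin²β`.
Along a meridian `∂ι_β/∂β = -ι`, and the orthogonal imaginary quaternions `ι`, `ι_β` anticommute,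
which gives (1). Along a parallel `∂ι_β/∂α = cot β · ι_α`, so the left side of (4) is
`-cot β · ι_α⁻¹ ι_α`. -/

namespace Quaternion

theorem hasDerivAt_mk {w x y z : ℝ → ℝ} {w' x' y' z' t : ℝ}
    (hw : HasDerivAt w w' t) (hx : HasDerivAt x x' t)
    (hy : HasDerivAt y y' t) (hz : HasDerivAt z z' t) :
    HasDerivAt (F := ℍ[ℝ]) (fun s => ⟨w s, x s, y s, z s⟩) ⟨w', x', y', z'⟩ t := by
  have hv : HasDerivAt (fun s => ![w s, x s, y s, z s]) ![w', x', y', z'] t := by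
    refine hasDerivAt_pi.2 fun i => ?_
    fin_cases i <;> assumption
  let e : ℍ[ℝ] ≃ₗ[ℝ] (Fin 4 → ℝ) := QuaternionAlgebra.linearEquivTuple (-1 : ℝ) 0 (-1)
  exact e.symm.toContinuousLinearEquiv.hasFDerivAt.comp_hasDerivAt t hv

variable {a b : ℍ[ℝ]}

theorem inv_eq_neg_of_re_eq_zero (ha : a.re = 0) (hn : normSq a = 1) : a⁻¹ = -a := by
  rw [inv_def, hn, inv_one, one_smul, star_eq_neg.2 ha]

theorem inv_sq_of_re_eq_zero (ha : a.re = 0) : a⁻¹ ^ 2 = ((-(normSq a)⁻¹ : ℝ) : ℍ[ℝ]) := by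
  rw [inv_pow, sq_eq_neg_normSq.2 ha]
  push_cast
  exact inv_neg

theorem mul_comm_eq_neg_of_re_eq_zero (ha : a.re = 0) (hb : b.re = 0) (hab : (a * b).re = 0) :
    b * a = -(a * b) := by
  rw [← star_eq_neg.2 hab, star_mul, star_eq_neg.2 ha, star_eq_neg.2 hb, neg_mul_neg]

end Quaternion

open Real

variable (α β : ℝ)

theorem iotaA_eq : iotaA α β = ⟨0, -sin α * sin β, cos α * sin β, 0⟩ :=
  (hasDerivAt_mk (hasDerivAt_const _ _) ((hasDerivAt_cos α).mul_const _)
    ((hasDerivAt_sin α).mul_const _) (hasDerivAt_const _ _)).deriv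

theorem iotaB_eq : iotaB α β = ⟨0, cos α * cos β, sin α * cos β, -sin β⟩ :=
  (hasDerivAt_mk (hasDerivAt_const _ _) ((hasDerivAt_sin β).const_mul _)
    ((hasDerivAt_sin β).const_mul _) (hasDerivAt_cos β)).deriv

theorem re_iotaA : (iotaA α β).re = 0 := by rw [iotaA_eq]

theorem re_iotaB : (iotaB α β).re = 0 := by rw [iotaB_eq]

theorem normSq_iotaA : normSq (iotaA α β) = sin β ^ 2 := by
  rw [normSq_def', iotaA_eq]
  linear_combination sin β ^ 2 * sin_sq_add_cos_sq α

theorem normSq_iotaB : normSq (iotaB α β) = 1 := by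
  rw [normSq_def', iotaB_eq]
  linear_combination cos β ^ 2 * sin_sq_add_cos_sq α + sin_sq_add_cos_sq β

theorem iotaB_inv : (iotaB α β)⁻¹ = -iotaB α β :=
  inv_eq_neg_of_re_eq_zero (re_iotaB α β) (normSq_iotaB α β)

theorem re_iota_mul_iotaB : (iota α β * iotaB α β).re = 0 := by
  rw [re_mul, iotaB_eq, iota]
  linear_combination -(sin β * cos β) * sin_sq_add_cos_sq α

theorem hasDerivAt_iotaB_right : HasDerivAt (fun b => iotaB α b) (-iota α β) β := by
  rw [show (fun b => iotaB α b) = _ from funext (iotaB_eq α)]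
  refine (hasDerivAt_mk (hasDerivAt_const _ _) ((hasDerivAt_cos β).const_mul _)
    ((hasDerivAt_cos β).const_mul _) (hasDerivAt_sin β).fun_neg).congr_deriv ?_
  -- `simp` before unfolding `iota`: the unfolded `⟨…⟩` is typed as a `QuaternionAlgebra`, which
  -- the `Quaternion` simp lemmas do not match
  ext <;> simp <;> simp [iota]

theorem hasDerivAt_iotaB_left (h : sin β ≠ 0) :
    HasDerivAt (fun a => iotaB a β) ((cos β / sin β) • iotaA α β) α := by
  rw [show (fun a => iotaB a β) = _ from funext fun a => iotaB_eq a β]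
  refine (hasDerivAt_mk (hasDerivAt_const _ _) ((hasDerivAt_cos α).mul_const _)
    ((hasDerivAt_sin α).mul_const _) (hasDerivAt_const _ _)).congr_deriv ?_
  ext <;> simp <;> simp [iotaA_eq] <;> field_simp

/-- For `sin β ≠ 0`:
(1) `ι_β⁻¹ ∂(ι_β⁻¹)/∂β = -ι ι_β⁻¹`; (2) `(ι_β⁻¹)² = -1`; (3) `(ι_α⁻¹)² = -1/sin²β`;
(4) `ι_α⁻¹ ∂(ι_β⁻¹)/∂α = -cot β`. -/
theorem iota_inv_identities (α β : ℝ) (h : Real.sin β ≠ 0) :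
    (iotaB α β)⁻¹ * deriv (fun b => (iotaB α b)⁻¹) β = -(iota α β * (iotaB α β)⁻¹) ∧
    ((iotaB α β)⁻¹)^2 = -1 ∧
    ((iotaA α β)⁻¹)^2 = ((-(((Real.sin β)^2)⁻¹) : ℝ) : ℍ[ℝ]) ∧
    (iotaA α β)⁻¹ * deriv (fun a => (iotaB a β)⁻¹) α
      = ((-(Real.cos β / Real.sin β) : ℝ) : ℍ[ℝ]) := by
  have hA : iotaA α β ≠ 0 := by
    rw [← normSq_ne_zero, normSq_iotaA]
    exact pow_ne_zero 2 h
  simp only [iotaB_inv]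
  refine ⟨?_, ?_, ?_, ?_⟩
  · rw [(hasDerivAt_iotaB_right α β).fun_neg.deriv, neg_neg, mul_neg, neg_mul, neg_neg,
      mul_comm_eq_neg_of_re_eq_zero rfl (re_iotaB α β) (re_iota_mul_iotaB α β), neg_neg]
  · rw [neg_sq, sq_eq_neg_normSq.2 (re_iotaB α β), normSq_iotaB, coe_one]
  · rw [inv_sq_of_re_eq_zero (re_iotaA α β), normSq_iotaA]
  · rw [(hasDerivAt_iotaB_left α β h).fun_neg.deriv, mul_neg, mul_smul_comm, inv_mul_cancel₀ hA,
      ← coe_one, smul_coe, mul_one, coe_neg]
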